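/- arXiv:1106.0566 — 4 statements merged into one kernel-verified Lean document; each statement's English description precedes it below -/
import Mathlib

section
/- Let w_1,...,w_i, v_1,...,v_j be i+j independent identically distributed {0,1}-valued random variables with j ≥ 1. Then P(∑_{k=1}^i w_k > ∑_{k=1}^j v_k) ≤ i/j. -/
/-!
On the event `∑ v < ∑ w` the variable `∑ w / (∑ v + 1)` is at least `1`, so by Markov's
inequality the probability is at most `∑ₖ E[w_k / (∑ v + 1)]`. Since `w_k ≤ 1`, each term is at
most `E[w_k / (w_k + ∑ v)]`. The `j + 1` variables `w_k, v_1, …, v_j` are exchangeable, so the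
ratios `x / (w_k + ∑ v)` for `x` among them all have the same expectation; as they sum to at most
`1`, each is at most `1 / (j + 1)`. Hence the probability is at most `i / (j + 1) ≤ i / j`.
-/

open MeasureTheory ProbabilityTheory Finset

section

variable {Ω ι : Type*} [MeasurableSpace Ω] {μ : Measure Ω}

lemma integrable_div_of_nonneg_of_le [IsFiniteMeasure μ] {f g : Ω → ℝ} (hf : AEMeasurable f μ)
    (hg : AEMeasurable g μ) (hf0 : ∀ ω, 0 ≤ f ω) (hfg : ∀ ω, f ω ≤ g ω) :
    Integrable (fun ω ↦ f ω / g ω) μ := by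
  refine (integrable_const 1).mono' (hf.div hg).aestronglyMeasurable (ae_of_all _ fun ω ↦ ?_)
  rw [Real.norm_of_nonneg (div_nonneg (hf0 ω) ((hf0 ω).trans (hfg ω)))]
  exact div_le_one_of_le₀ (hfg ω) ((hf0 ω).trans (hfg ω))

lemma measureReal_lt_le_integral_div [IsFiniteMeasure μ] {S T : Ω → ℕ}
    (hint : Integrable (fun ω ↦ (S ω : ℝ) / (T ω + 1)) μ) :
    μ.real {ω | T ω < S ω} ≤ ∫ ω, (S ω : ℝ) / (T ω + 1) ∂μ := by
  have hmarkov := mul_meas_ge_le_integral_of_nonneg (ae_of_all _ fun ω ↦ by positivity) hint 1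
  rw [one_mul] at hmarkov
  refine (measureReal_mono fun ω (hω : T ω < S ω) ↦ ?_).trans hmarkov
  rw [Set.mem_ofPred_eq, one_le_div (by positivity)]
  exact_mod_cast hω

lemma integrable_div_sum_of_mem [IsFiniteMeasure μ] {X : ι → Ω → ℝ}
    (hX : ∀ k, AEMeasurable (X k) μ) (h0 : ∀ k ω, 0 ≤ X k ω) {A : Finset ι} {a : ι}
    (ha : a ∈ A) : Integrable (fun ω ↦ X a ω / ∑ b ∈ A, X b ω) μ :=
  integrable_div_of_nonneg_of_le (hX a) (A.aemeasurable_fun_sum fun b _ ↦ hX b) (h0 a)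
    fun ω ↦ single_le_sum (fun b _ ↦ h0 b ω) ha

lemma integrable_div_sum_add_one [IsFiniteMeasure μ] {X : ι → Ω → ℝ}
    (hX : ∀ k, AEMeasurable (X k) μ) (h0 : ∀ k ω, 0 ≤ X k ω) (h1 : ∀ k ω, X k ω ≤ 1)
    (a : ι) (B : Finset ι) : Integrable (fun ω ↦ X a ω / (∑ b ∈ B, X b ω + 1)) μ :=
  integrable_div_of_nonneg_of_le (hX a) ((B.aemeasurable_fun_sum fun b _ ↦ hX b).add_const 1)
    (h0 a) fun ω ↦ by linarith [h1 a ω, sum_nonneg fun b (_ : b ∈ B) ↦ h0 b ω]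

end

namespace ProbabilityTheory

variable {Ω ι β : Type*} [MeasurableSpace Ω] [MeasurableSpace β] {μ : Measure Ω}

def Exchangeable (X : ι → Ω → β) (μ : Measure Ω) : Prop :=
  ∀ σ : Equiv.Perm ι, IdentDistrib (fun ω k ↦ X k ω) (fun ω k ↦ X (σ k) ω) μ μ

lemma iIndepFun.exchangeable [Countable ι] {X : ι → Ω → β} (hind : iIndepFun X μ)
    (hident : ∀ k l, IdentDistrib (X k) (X l) μ μ) : Exchangeable X μ := fun σ ↦
  IdentDistrib.pi (fun k ↦ hident k (σ k)) hind (hind.precomp σ.injective)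

lemma Exchangeable.aemeasurable {X : ι → Ω → β} (hX : Exchangeable X μ) (k : ι) :
    AEMeasurable (X k) μ :=
  (measurable_pi_apply k).comp_aemeasurable (hX 1).aemeasurable_fst

lemma Exchangeable.integral_div_sum_eq [DecidableEq ι] {X : ι → Ω → ℝ} (hX : Exchangeable X μ)
    {A : Finset ι} {a b : ι} (ha : a ∈ A) (hb : b ∈ A) :
    ∫ ω, X a ω / ∑ c ∈ A, X c ω ∂μ = ∫ ω, X b ω / ∑ c ∈ A, X c ω ∂μ := by
  have hG : Measurable fun x : ι → ℝ ↦ x a / ∑ c ∈ A, x c := by fun_prop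
  have hswap : ∀ ω, ∑ c ∈ A, X (Equiv.swap a b c) ω = ∑ c ∈ A, X c ω := fun ω ↦
    Equiv.Perm.sum_comp _ A (X · ω) fun c hc ↦ by
      by_contra hcA
      exact hc (Equiv.swap_apply_of_ne_of_ne (fun h ↦ hcA (h ▸ ha)) fun h ↦ hcA (h ▸ hb))
  simpa [Function.comp_def, hswap] using ((hX (Equiv.swap a b)).comp hG).integral_eq

lemma Exchangeable.integral_div_sum_le [IsProbabilityMeasure μ] [DecidableEq ι]
    {X : ι → Ω → ℝ} (hX : Exchangeable X μ) (h0 : ∀ k ω, 0 ≤ X k ω) {A : Finset ι} {a : ι}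
    (ha : a ∈ A) : ∫ ω, X a ω / ∑ b ∈ A, X b ω ∂μ ≤ 1 / #A := by
  have hint : ∀ b ∈ A, Integrable (fun ω ↦ X b ω / ∑ c ∈ A, X c ω) μ := fun _ hb ↦
    integrable_div_sum_of_mem hX.aemeasurable h0 hb
  rw [le_div_iff₀' (by exact_mod_cast card_pos.mpr ⟨a, ha⟩)]
  calc (#A : ℝ) * ∫ ω, X a ω / ∑ b ∈ A, X b ω ∂μ
      = ∑ b ∈ A, ∫ ω, X b ω / ∑ c ∈ A, X c ω ∂μ := by
        rw [sum_congr rfl fun b hb ↦ (hX.integral_div_sum_eq ha hb).symm, sum_const, nsmul_eq_mul]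
    _ = ∫ ω, ∑ b ∈ A, X b ω / ∑ c ∈ A, X c ω ∂μ := (integral_finsetSum A hint).symm
    _ ≤ ∫ _, (1 : ℝ) ∂μ := integral_mono (integrable_finsetSum A hint) (integrable_const 1)
        fun ω ↦ by simpa only [← sum_div] using div_self_le_one _
    _ = 1 := by simp

lemma Exchangeable.integral_div_sum_add_one_le [IsProbabilityMeasure μ] [DecidableEq ι]
    {X : ι → Ω → ℝ} (hX : Exchangeable X μ) (h0 : ∀ k ω, 0 ≤ X k ω) (h1 : ∀ k ω, X k ω ≤ 1)
    {B : Finset ι} {a : ι} (ha : a ∉ B) :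
    ∫ ω, X a ω / (∑ b ∈ B, X b ω + 1) ∂μ ≤ 1 / (#B + 1) := by
  have hmono : ∀ ω, X a ω / (∑ b ∈ B, X b ω + 1) ≤ X a ω / ∑ b ∈ insert a B, X b ω := by
    intro ω
    rw [sum_insert ha, add_comm (X a ω)]
    rcases (h0 a ω).eq_or_lt with hzero | hpos
    · simp [← hzero]
    · exact div_le_div_of_nonneg_left hpos.le
        (by linarith [sum_nonneg fun b (_ : b ∈ B) ↦ h0 b ω]) (by linarith [h1 a ω])
  calc ∫ ω, X a ω / (∑ b ∈ B, X b ω + 1) ∂μ ≤ ∫ ω, X a ω / ∑ b ∈ insert a B, X b ω ∂μ :=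
        integral_mono (integrable_div_sum_add_one hX.aemeasurable h0 h1 a B)
          (integrable_div_sum_of_mem hX.aemeasurable h0 (mem_insert_self a B)) hmono
    _ ≤ 1 / #(insert a B) := hX.integral_div_sum_le h0 (mem_insert_self a B)
    _ = 1 / (#B + 1) := by rw [card_insert_of_notMem ha, Nat.cast_succ]

end ProbabilityTheory

lemma castAdd_notMem_map_natAddEmb {m n : ℕ} (k : Fin m) :
    Fin.castAdd n k ∉ univ.map (Fin.natAddEmb m) := by
  intro hk
  obtain ⟨l, -, hl⟩ := mem_map.mp hk
  have := congrArg Fin.val hl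
  simp only [Fin.natAddEmb_apply, Fin.val_natAdd, Fin.val_castAdd] at this
  omega

/-- Droste's lemma: if `w_1,…,w_i, v_1,…,v_j` are `i+j` independent
identically distributed `{0,1}`-valued random variables with `j ≥ 1`, then
`P(∑ w_k > ∑ v_k) ≤ i/j`. -/
theorem droste_sum_compare {Ω : Type*} [MeasurableSpace Ω]
    (μ : Measure Ω) [IsProbabilityMeasure μ]
    (i j : ℕ) (hj : 1 ≤ j) (X : Fin (i + j) → Ω → ℕ)
    (hmeas : ∀ k, Measurable (X k))
    (hval : ∀ k ω, X k ω ≤ 1)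
    (hindep : iIndepFun X μ)
    (hident : ∀ k l, Measure.map (X k) μ = Measure.map (X l) μ) :
    (μ {ω | (∑ k : Fin j, X (Fin.natAdd i k) ω) < ∑ k : Fin i, X (Fin.castAdd j k) ω}).toReal
      ≤ (i : ℝ) / (j : ℝ) := by
  set Y : Fin (i + j) → Ω → ℝ := fun k ω ↦ X k ω
  have hY : Exchangeable Y μ :=
    (hindep.comp (fun _ ↦ Nat.cast) fun _ ↦ measurable_from_top).exchangeable fun k l ↦
      (IdentDistrib.mk (hmeas k).aemeasurable (hmeas l).aemeasurable (hident k l)).comp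
        measurable_from_top
  have hY0 : ∀ k ω, 0 ≤ Y k ω := fun _ _ ↦ Nat.cast_nonneg _
  have hY1 : ∀ k ω, Y k ω ≤ 1 := fun k ω ↦ Nat.cast_le_one.mpr (hval k ω)
  set T : Ω → ℝ := fun ω ↦ ∑ b ∈ univ.map (Fin.natAddEmb i), Y b ω
  have hint : ∀ k : Fin i, Integrable (fun ω ↦ Y (Fin.castAdd j k) ω / (T ω + 1)) μ := fun k ↦
    integrable_div_sum_add_one hY.aemeasurable hY0 hY1 _ _
  have hsplit : (fun ω ↦ ((∑ k : Fin i, X (Fin.castAdd j k) ω : ℕ) : ℝ) /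
      ((∑ k : Fin j, X (Fin.natAdd i k) ω : ℕ) + 1)) =
      fun ω ↦ ∑ k, Y (Fin.castAdd j k) ω / (T ω + 1) := by
    ext ω
    simp only [Nat.cast_sum, sum_div, sum_map, Fin.natAddEmb_apply, T, Y]
  calc _ ≤ ∫ ω, ∑ k, Y (Fin.castAdd j k) ω / (T ω + 1) ∂μ := by
        rw [← hsplit]
        exact measureReal_lt_le_integral_div (hsplit ▸ integrable_finsetSum _ fun k _ ↦ hint k)
    _ = ∑ k, ∫ ω, Y (Fin.castAdd j k) ω / (T ω + 1) ∂μ :=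
        integral_finsetSum _ fun k _ ↦ hint k
    _ ≤ ∑ _k : Fin i, 1 / ((j : ℝ) + 1) := sum_le_sum fun k _ ↦ by
        simpa only [card_map, card_univ, Fintype.card_fin] using
          hY.integral_div_sum_add_one_le hY0 hY1 (castAdd_notMem_map_natAddEmb k)
    _ ≤ i / j := by
        rw [sum_const, card_univ, Fintype.card_fin, nsmul_eq_mul, mul_one_div]
        gcongr
        linarith
end

section
/- Let 0 ≤ i ≤ j ≤ n and σ ∈ [0,1]. Then ∑_{k=0}^{min(i, n−j)} C(n−i, j−i+k)·C(i, k)·σ^{j−i+2k}·(1−σ)^{n−(j−i+2k)} ≤ C(n, n−j)·σ^{j−i}. -/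
/-!
Every factor `σ ^ (j - i + 2k) (1 - σ) ^ (…)` is at most `σ ^ (j - i)`, and after reindexing
`k ↦ (j - i + k, i - k)` the remaining binomial sum is part of Vandermonde's sum for
`C(n, j) = C(n, n - j)`.
-/

open Finset

theorem Nat.sum_range_choose_add_mul_choose (a b d : ℕ) :
    ∑ k ∈ range (b + 1), a.choose (d + k) * b.choose k = (a + b).choose (d + b) := by
  rw [Nat.add_choose_eq]
  refine sum_bij_ne_zero (fun k _ _ => (d + k, b - k)) ?_ ?_ ?_ ?_
  · intro k hk _
    simp only [mem_range] at hk
    simp only [HasAntidiagonal.mem_antidiagonal]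
    omega
  · intro k₁ hk₁ _ k₂ hk₂ _ h
    simp only [mem_range] at hk₁ hk₂
    simp only [Prod.mk.injEq] at h
    omega
  · rintro ⟨p, q⟩ hpq hne
    simp only [HasAntidiagonal.mem_antidiagonal] at hpq
    have hqb : q ≤ b := by
      by_contra! h
      exact hne (by rw [Nat.choose_eq_zero_of_lt h, mul_zero])
    refine ⟨b - q, mem_range.2 (by omega), ?_, ?_⟩
    · rwa [show d + (b - q) = p by omega, Nat.choose_symm hqb]
    · simp only [Prod.mk.injEq]
      omega
  · intro k hk _
    rw [← Nat.choose_symm (Nat.le_of_lt_succ (mem_range.1 hk))]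

theorem pow_add_mul_one_sub_pow_le {σ : ℝ} (hσ0 : 0 ≤ σ) (hσ1 : σ ≤ 1) (m l r : ℕ) :
    σ ^ (m + l) * (1 - σ) ^ r ≤ σ ^ m :=
  calc σ ^ (m + l) * (1 - σ) ^ r ≤ σ ^ (m + l) :=
        mul_le_of_le_one_right (by positivity) (pow_le_one₀ (by linarith) (by linarith))
    _ ≤ σ ^ m := pow_le_pow_of_le_one hσ0 hσ1 (Nat.le_add_right m l)

/-- For 0 ≤ i ≤ j ≤ n and σ ∈ [0,1],
∑_{k=0}^{min(i, n−j)} C(n−i, j−i+k)·C(i, k)·σ^{j−i+2k}·(1−σ)^{n−(j−i+2k)}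
  ≤ C(n, n−j)·σ^{j−i}. -/
theorem transition_prob_le (n i j : ℕ) (hij : i ≤ j) (hjn : j ≤ n)
    (σ : ℝ) (hσ0 : 0 ≤ σ) (hσ1 : σ ≤ 1) :
    ∑ k ∈ Finset.range (min i (n - j) + 1),
        ((n - i).choose (j - i + k) : ℝ) * ((i.choose k : ℕ) : ℝ) *
          σ ^ (j - i + 2 * k) * (1 - σ) ^ (n - (j - i + 2 * k))
      ≤ (n.choose (n - j) : ℝ) * σ ^ (j - i) := by
  have hchoose : ∑ k ∈ range (min i (n - j) + 1), (n - i).choose (j - i + k) * i.choose k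
      ≤ n.choose (n - j) :=
    calc _ ≤ ∑ k ∈ range (i + 1), (n - i).choose (j - i + k) * i.choose k :=
          sum_le_sum_of_subset (range_subset_range.2 (by omega))
      _ = n.choose (n - j) := by
          rw [Nat.sum_range_choose_add_mul_choose, Nat.sub_add_cancel (hij.trans hjn),
            Nat.sub_add_cancel hij, Nat.choose_symm hjn]
  calc _ ≤ ∑ k ∈ range (min i (n - j) + 1),
          ((n - i).choose (j - i + k) : ℝ) * (i.choose k : ℝ) * σ ^ (j - i) := by
        refine sum_le_sum fun k _ => ?_
        rw [mul_assoc]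
        exact mul_le_mul_of_nonneg_left (pow_add_mul_one_sub_pow_le hσ0 hσ1 _ _ _)
          (by positivity)
    _ = ((∑ k ∈ range (min i (n - j) + 1),
          (n - i).choose (j - i + k) * i.choose k : ℕ) : ℝ) * σ ^ (j - i) := by
        push_cast
        rw [sum_mul]
    _ ≤ (n.choose (n - j) : ℝ) * σ ^ (j - i) :=
        mul_le_mul_of_nonneg_right (by exact_mod_cast hchoose) (by positivity)
end

section
/- Let 0 ≤ i ≤ n, let j satisfy n − n/(log n)³ ≤ j ≤ n with i = o(n) and i > n/(log n)², and let r ∈ [0,1] satisfy r ≤ max{1/2, 1−h} for a constant h ∈ (0,1). Then for sufficiently large n, ∑_{k=0}^{min(i,n−j)} C(n−i, j−i+k)·C(i,k)·r^{j−i+2k}·(1−r)^{n−(j−i+2k)} ≤ n^{n−j}·(max{1/2, 1−h})^{j−i}, and this bound is super-polynomially small in n (i.e., smaller than n^{−c} for every constant c for all sufficiently large n). -/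
open Filter Asymptotics Finset

/-!
Dropping the factor `(1 - r)^(…) ≤ 1` and bounding `r^(j-i+2k) ≤ M^(j-i)` with
`M = max (1/2) (1-h)`, the remaining sum of products of binomials is part of Vandermonde's
convolution for `C(n, j)`, and `C(n, j) = C(n, n-j) ≤ n^(n-j)`. Taking logarithms, the bound is
`exp((n-j) log n - (j-i) log(1/M))`; here `(n-j) log n ≤ n / (log n)²` and `c log n` are `o(n)`,
while `j - i ≥ n/2` eventually because `i = o(n)`, so the exponent is eventually below `-c log n`.
-/

theorem sum_choose_mul_choose_le_choose {n i j : ℕ} (hij : i ≤ j) (hjn : j ≤ n) :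
    ∑ k ∈ range (min i (n - j) + 1), (n - i).choose (j - i + k) * i.choose k
      ≤ n.choose j := by
  have hreindex : ∑ k ∈ range (min i (n - j) + 1), (n - i).choose (j - i + k) * i.choose k
      = ∑ p ∈ (range (min i (n - j) + 1)).image (fun k => (j - i + k, i - k)),
          (n - i).choose p.1 * i.choose p.2 := by
    rw [sum_image fun a _ b _ hab => by simpa using congrArg Prod.fst hab]
    refine sum_congr rfl fun k hk => ?_
    rw [Nat.choose_symm (by grind)]
  have hvandermonde : n.choose j = ∑ p ∈ antidiagonal j, (n - i).choose p.1 * i.choose p.2 := by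
    rw [← Nat.add_choose_eq, Nat.sub_add_cancel (hij.trans hjn)]
  rw [hreindex, hvandermonde]
  refine sum_le_sum_of_subset fun p hp => ?_
  obtain ⟨k, hk, rfl⟩ := mem_image.mp hp
  rw [mem_range] at hk
  rw [HasAntidiagonal.mem_antidiagonal]
  omega

theorem sum_transition_le {n i j : ℕ} {r M : ℝ} (hij : i ≤ j) (hjn : j ≤ n)
    (hr0 : 0 ≤ r) (hr1 : r ≤ 1) (hrM : r ≤ M) :
    ∑ k ∈ range (min i (n - j) + 1),
        ((n - i).choose (j - i + k) : ℝ) * (i.choose k : ℝ) * r ^ (j - i + 2 * k) *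
          (1 - r) ^ (n - (j - i + 2 * k))
      ≤ (n : ℝ) ^ (n - j) * M ^ (j - i) := by
  calc _ ≤ ∑ k ∈ range (min i (n - j) + 1),
          ((n - i).choose (j - i + k) : ℝ) * (i.choose k : ℝ) * M ^ (j - i) := by
        refine sum_le_sum fun k _ => ?_
        have hpow : r ^ (j - i + 2 * k) * (1 - r) ^ (n - (j - i + 2 * k)) ≤ M ^ (j - i) :=
          calc _ ≤ r ^ (j - i + 2 * k) * 1 := by
                gcongr
                exact pow_le_one₀ (by linarith) (by linarith)
            _ ≤ r ^ (j - i) := by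
                rw [mul_one]
                exact pow_le_pow_of_le_one hr0 hr1 (by omega)
            _ ≤ M ^ (j - i) := pow_le_pow_left₀ hr0 hrM _
        rw [mul_assoc _ (r ^ _)]
        gcongr
    _ = ((∑ k ∈ range (min i (n - j) + 1), (n - i).choose (j - i + k) * i.choose k : ℕ)
          : ℝ) * M ^ (j - i) := by
        push_cast
        rw [sum_mul]
    _ ≤ (n.choose j : ℝ) * M ^ (j - i) := by
        gcongr
        · exact pow_nonneg (hr0.trans hrM) _
        · exact_mod_cast sum_choose_mul_choose_le_choose hij hjn
    _ ≤ (n : ℝ) ^ (n - j) * M ^ (j - i) := by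
        gcongr
        · exact pow_nonneg (hr0.trans hrM) _
        · rw [← Nat.choose_symm hjn]
          exact_mod_cast Nat.choose_le_pow n (n - j)

theorem Real.isLittleO_div_log_sq_id_atTop :
    (fun x : ℝ => x / Real.log x ^ 2) =o[atTop] fun x => x := by
  have hinv : (fun x : ℝ => (Real.log x ^ 2)⁻¹) =o[atTop] (fun _ => (1 : ℝ)) :=
    (isLittleO_one_iff ℝ).mpr <|
      ((tendsto_pow_atTop two_ne_zero).comp Real.tendsto_log_atTop).inv_tendsto_atTop
  simpa [div_eq_mul_inv] using (isBigO_refl id atTop).mul_isLittleO hinv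

theorem isLittleO_sub_mul_log_of_le_div_log_cube {j : ℕ → ℕ} (hjn : ∀ n, j n ≤ n)
    (hjlb : ∀ᶠ n : ℕ in atTop, (n : ℝ) - n / Real.log n ^ 3 ≤ j n) :
    (fun n : ℕ => ((n - j n : ℕ) : ℝ) * Real.log n) =o[atTop] (fun n : ℕ => (n : ℝ)) := by
  refine IsBigO.trans_isLittleO ?_
    (Real.isLittleO_div_log_sq_id_atTop.comp_tendsto tendsto_natCast_atTop_atTop)
  refine IsBigO.of_bound 1 ?_
  filter_upwards [hjlb, eventually_ge_atTop 2] with n hn hn2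
  have hlog : 0 < Real.log n := Real.log_pos (by exact_mod_cast hn2)
  have hgap : ((n - j n : ℕ) : ℝ) ≤ n / Real.log n ^ 3 := by
    rw [Nat.cast_sub (hjn n)]; linarith
  rw [one_mul, Real.norm_of_nonneg (by positivity), Function.comp_apply,
    Real.norm_of_nonneg (by positivity)]
  calc ((n - j n : ℕ) : ℝ) * Real.log n ≤ n / Real.log n ^ 3 * Real.log n := by gcongr
    _ = n / Real.log n ^ 2 := by field_simp

theorem eventually_half_le_sub {i j : ℕ → ℕ} (hij : ∀ n, i n ≤ j n)
    (hjlb : ∀ᶠ n : ℕ in atTop, (n : ℝ) - n / Real.log n ^ 3 ≤ j n)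
    (hio : (fun n : ℕ => (i n : ℝ)) =o[atTop] (fun n : ℕ => (n : ℝ))) :
    ∀ᶠ n : ℕ in atTop, 1 / 2 * (n : ℝ) ≤ ((j n - i n : ℕ) : ℝ) := by
  have hlog : ∀ᶠ n : ℕ in atTop, 2 ≤ Real.log n :=
    (Real.tendsto_log_atTop.comp tendsto_natCast_atTop_atTop).eventually_ge_atTop 2
  filter_upwards [hjlb, hlog, hio.def (by norm_num : (0 : ℝ) < 1 / 4)] with n hj hlog hi
  rw [Real.norm_natCast, Real.norm_natCast] at hi
  have hcube : (n : ℝ) / Real.log n ^ 3 ≤ n / 4 :=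
    div_le_div_of_nonneg_left n.cast_nonneg (by norm_num)
      (by nlinarith [pow_le_pow_left₀ zero_le_two hlog 3])
  rw [Nat.cast_sub (hij n)]
  linarith

theorem eventually_natCast_pow_mul_pow_lt_rpow_neg {M δ : ℝ} (hM0 : 0 < M) (hM1 : M < 1)
    (hδ : 0 < δ) {a b : ℕ → ℕ}
    (ha : (fun n : ℕ => (a n : ℝ) * Real.log n) =o[atTop] (fun n : ℕ => (n : ℝ)))
    (hb : ∀ᶠ n : ℕ in atTop, δ * n ≤ b n) (c : ℝ) :
    ∀ᶠ n : ℕ in atTop, (n : ℝ) ^ a n * M ^ b n < (n : ℝ) ^ (-c) := by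
  obtain ⟨m, hm_def⟩ : ∃ m, m = -Real.log M := ⟨_, rfl⟩
  have hm : 0 < m := hm_def ▸ neg_pos.mpr (Real.log_neg hM0 hM1)
  have hε : 0 < δ * m / 4 := by positivity
  have hclog : (fun n : ℕ => c * Real.log n) =o[atTop] (fun n : ℕ => (n : ℝ)) :=
    (Real.isLittleO_log_id_atTop.comp_tendsto tendsto_natCast_atTop_atTop).const_mul_left c
  filter_upwards [ha.def hε, hclog.def hε, hb, eventually_ge_atTop 1]
    with n hgap hpoly hlin hn
  have hn0 : (0 : ℝ) < n := by exact_mod_cast hn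
  rw [Real.norm_natCast] at hgap hpoly
  rw [← Real.log_lt_log_iff (by positivity) (by positivity), Real.log_mul (by positivity)
    (by positivity), Real.log_pow, Real.log_pow, Real.log_rpow hn0]
  have hdecay : (b n : ℝ) * Real.log M ≤ -(δ * m * n) := by
    have := mul_le_mul_of_nonneg_right hlin hm.le
    rw [hm_def] at this ⊢
    linarith
  have : 0 < δ * m * n := by positivity
  rw [Real.norm_eq_abs, abs_le] at hgap hpoly
  linarith [hgap.2, hpoly.1]

theorem transition_to_forbidden_superpoly_small_general (h : ℝ) (hh0 : 0 < h)
    (i j : ℕ → ℕ) (r : ℕ → ℝ)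
    (hij : ∀ n, i n ≤ j n) (hjn : ∀ n, j n ≤ n)
    (hjlb : ∀ᶠ n : ℕ in atTop, (n : ℝ) - (n : ℝ) / (Real.log n) ^ 3 ≤ (j n : ℝ))
    (hio : (fun n : ℕ => (i n : ℝ)) =o[atTop] (fun n : ℕ => (n : ℝ)))
    (hr0 : ∀ n, 0 ≤ r n) (hr1 : ∀ n, r n ≤ 1)
    (hrmax : ∀ n, r n ≤ max (1 / 2) (1 - h)) :
    (∀ᶠ n : ℕ in atTop,
        ∑ k ∈ Finset.range (min (i n) (n - j n) + 1),
            ((n - i n).choose (j n - i n + k) : ℝ) * ((i n).choose k : ℝ) *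
              (r n) ^ (j n - i n + 2 * k) * (1 - r n) ^ (n - (j n - i n + 2 * k))
          ≤ (n : ℝ) ^ (n - j n) * (max (1 / 2) (1 - h)) ^ (j n - i n)) ∧
    ∀ c : ℝ, ∀ᶠ n : ℕ in atTop,
      (n : ℝ) ^ (n - j n) * (max (1 / 2) (1 - h)) ^ (j n - i n) < (n : ℝ) ^ (-c) := by
  refine ⟨.of_forall fun n => sum_transition_le (hij n) (hjn n) (hr0 n) (hr1 n) (hrmax n),
    fun c => ?_⟩
  have hM0 : (0 : ℝ) < max (1 / 2) (1 - h) := lt_max_of_lt_left one_half_pos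
  have hM1 : max (1 / 2) (1 - h) < 1 := max_lt one_half_lt_one (by linarith)
  exact eventually_natCast_pow_mul_pow_lt_rpow_neg hM0 hM1 one_half_pos
    (isLittleO_sub_mul_log_of_le_div_log_cube hjn hjlb) (eventually_half_le_sub hij hjlb hio) c

/-- with `i = i(n) = o(n)`, `i(n) > n/(log n)²`,
`n − n/(log n)³ ≤ j(n) ≤ n` and flip rate `r(n) ≤ max{1/2, 1−h}` for a constant
`h ∈ (0,1)`, the transition probability from `i` to exactly `j` matching bits
is eventually at most `n^{n−j}·(max{1/2, 1−h})^{j−i}`, a bound which is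
super-polynomially small in `n`. -/
theorem transition_to_forbidden_superpoly_small (h : ℝ) (hh0 : 0 < h) (hh1 : h < 1)
    (i j : ℕ → ℕ) (r : ℕ → ℝ)
    (hij : ∀ n, i n ≤ j n) (hjn : ∀ n, j n ≤ n)
    (hjlb : ∀ᶠ n : ℕ in atTop, (n : ℝ) - (n : ℝ) / (Real.log n) ^ 3 ≤ (j n : ℝ))
    (hio : (fun n : ℕ => (i n : ℝ)) =o[atTop] (fun n : ℕ => (n : ℝ)))
    (hilb : ∀ᶠ n : ℕ in atTop, (n : ℝ) / (Real.log n) ^ 2 < (i n : ℝ))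
    (hr0 : ∀ n, 0 ≤ r n) (hr1 : ∀ n, r n ≤ 1)
    (hrmax : ∀ n, r n ≤ max (1 / 2) (1 - h)) :
    (∀ᶠ n : ℕ in atTop,
        ∑ k ∈ Finset.range (min (i n) (n - j n) + 1),
            ((n - i n).choose (j n - i n + k) : ℝ) * ((i n).choose k : ℝ) *
              (r n) ^ (j n - i n + 2 * k) * (1 - r n) ^ (n - (j n - i n + 2 * k))
          ≤ (n : ℝ) ^ (n - j n) * (max (1 / 2) (1 - h)) ^ (j n - i n)) ∧
    ∀ c : ℝ, ∀ᶠ n : ℕ in atTop,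
      (n : ℝ) ^ (n - j n) * (max (1 / 2) (1 - h)) ^ (j n - i n) < (n : ℝ) ^ (-c) :=
  transition_to_forbidden_superpoly_small_general h hh0 i j r hij hjn hjlb hio hr0 hr1 hrmax
end

section
/- Fix constants 0 < ε₂ ≤ ε₁ < 1 and let ε₂n ≤ i ≤ ε₁n, and let j satisfy n − n/(log n)³ ≤ j ≤ n. If each of n bits is flipped independently with probability r where r = ω(log n/n) and r ≤ 1/2, then the probability that a string with i matching bits attains exactly j matching bits is at most C(n, n−j)·r^{j−i}·(1−r)^{n−(j−i)−2n/(log n)³}, which is super-polynomially small in n. -/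
open Filter Asymptotics Finset

set_option maxHeartbeats 1000000

lemma vand_aux (a b m : ℕ) :
    ∑ k ∈ Finset.range (m + 1), a.choose (m - k) * b.choose k = (a + b).choose m := by
  rw [Nat.add_choose_eq, Finset.Nat.sum_antidiagonal_eq_sum_range_succ_mk,
    ← Finset.sum_range_reflect]
  refine Finset.sum_congr rfl fun k hk => ?_
  simp only [Finset.mem_range] at hk
  have h1 : m + 1 - 1 - k = m - k := by omega
  have h2 : m - (m - k) = k := by omega
  rw [h1, h2]

/-- fix constants `0 < ε₂ ≤ ε₁ < 1`, let `ε₂n ≤ i(n) ≤ ε₁n`,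
`n − n/(log n)³ ≤ j(n) ≤ n`, and flip each of `n` bits independently with
probability `r(n) = ω(log n/n)`, `r(n) ≤ 1/2`. Then the probability
`∑_{k=0}^{min(i,n−j)} C(n−i, j−i+k)·C(i,k)·r^{j−i+2k}·(1−r)^{n−(j−i+2k)}` of
moving from `i` to exactly `j` matching bits is eventually at most
`C(n, n−j)·r^{j−i}·(1−r)^{n−(j−i)−2n/(log n)³}`, which is super-polynomially
small in `n`. -/
theorem transition_middle_superpoly_small (ε₁ ε₂ : ℝ)
    (hε2 : 0 < ε₂) (hε21 : ε₂ ≤ ε₁) (hε1 : ε₁ < 1)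
    (i j : ℕ → ℕ) (r : ℕ → ℝ)
    (hil : ∀ᶠ n : ℕ in atTop, ε₂ * n ≤ (i n : ℝ) ∧ (i n : ℝ) ≤ ε₁ * n)
    (hij : ∀ n, i n ≤ j n) (hjn : ∀ n, j n ≤ n)
    (hjl : ∀ᶠ n : ℕ in atTop, (n : ℝ) - (n : ℝ) / (Real.log n) ^ 3 ≤ (j n : ℝ))
    (hr0 : ∀ n, 0 ≤ r n) (hr12 : ∀ n, r n ≤ 1 / 2)
    (hrω : (fun n : ℕ => Real.log n / n) =o[atTop] r) :
    (∀ᶠ n : ℕ in atTop,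
        ∑ k ∈ Finset.range (min (i n) (n - j n) + 1),
            ((n - i n).choose (j n - i n + k) : ℝ) * ((i n).choose k : ℝ) *
              (r n) ^ (j n - i n + 2 * k) * (1 - r n) ^ (n - (j n - i n + 2 * k))
          ≤ (n.choose (n - j n) : ℝ) * (r n) ^ (j n - i n) *
              (1 - r n) ^ ((n : ℝ) - ((j n : ℝ) - (i n : ℝ)) - 2 * n / (Real.log n) ^ 3)) ∧
    ∀ c : ℝ, ∀ᶠ n : ℕ in atTop,
      (n.choose (n - j n) : ℝ) * (r n) ^ (j n - i n) *
          (1 - r n) ^ ((n : ℝ) - ((j n : ℝ) - (i n : ℝ)) - 2 * n / (Real.log n) ^ 3)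
        < (n : ℝ) ^ (-c) := by
  constructor
  · -- Part 1
    filter_upwards [hjl] with n hj
    set I := i n with hI
    set J := j n with hJ
    set R := r n with hR
    have hIJ : I ≤ J := hij n
    have hJn : J ≤ n := hjn n
    have hR0 : (0:ℝ) ≤ R := hr0 n
    have hR2 : R ≤ 1/2 := hr12 n
    have h1R : (0:ℝ) < 1 - R := by linarith
    have h1R1 : (1:ℝ) - R ≤ 1 := by linarith
    set E : ℝ := (n : ℝ) - ((J : ℝ) - (I : ℝ)) - 2 * n / (Real.log n) ^ 3 with hE
    have hmJ : ((n - J : ℕ) : ℝ) = (n:ℝ) - J := by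
      push_cast [Nat.cast_sub hJn]; ring
    have hnj : (n:ℝ) - (J:ℝ) ≤ (n:ℝ) / (Real.log n) ^ 3 := by linarith
    -- step A: per-term bound
    have stepA : ∀ k ∈ Finset.range (min I (n - J) + 1),
        ((n - I).choose (J - I + k) : ℝ) * ((I).choose k : ℝ) *
          R ^ (J - I + 2 * k) * (1 - R) ^ (n - (J - I + 2 * k))
        ≤ ((n - I).choose (J - I + k) : ℝ) * ((I).choose k : ℝ) *
          (R ^ (J - I) * (1 - R) ^ E) := by
      intro k hk
      simp only [Finset.mem_range] at hk
      have hkI : k ≤ I := by omega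
      have hkm : k ≤ n - J := by omega
      have hrp : R ^ (J - I + 2 * k) ≤ R ^ (J - I) :=
        pow_le_pow_of_le_one hR0 (by linarith) (by omega)
      have hexp : E ≤ ((n - (J - I + 2 * k) : ℕ) : ℝ) := by
        have hc : ((n - (J - I + 2 * k) : ℕ) : ℝ) = (n:ℝ) - ((J:ℝ) - I) - 2 * k := by
          have h1 : J - I + 2 * k ≤ n := by omega
          push_cast [Nat.cast_sub h1, Nat.cast_sub hIJ]
          ring
        have hkr : (k : ℝ) ≤ (n:ℝ) / (Real.log n) ^ 3 := by
          have : (k : ℝ) ≤ ((n - J : ℕ) : ℝ) := by exact_mod_cast hkm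
          rw [hmJ] at this; linarith
        have h2 : 2*(n:ℝ)/(Real.log n)^3 = 2*((n:ℝ)/(Real.log n)^3) := by ring
        rw [hc, hE, h2]; linarith
      have hq : ((1:ℝ) - R) ^ (n - (J - I + 2 * k)) ≤ (1 - R) ^ E := by
        rw [← Real.rpow_natCast]
        exact Real.rpow_le_rpow_of_exponent_ge h1R h1R1 hexp
      calc ((n - I).choose (J - I + k) : ℝ) * ((I).choose k : ℝ) *
          R ^ (J - I + 2 * k) * (1 - R) ^ (n - (J - I + 2 * k))
          ≤ ((n - I).choose (J - I + k) : ℝ) * ((I).choose k : ℝ) *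
          R ^ (J - I) * (1 - R) ^ E := by
            gcongr <;> positivity
        _ = _ := by ring
    refine le_trans (Finset.sum_le_sum stepA) ?_
    rw [← Finset.sum_mul]
    -- step B
    have stepB : ∑ k ∈ Finset.range (min I (n - J) + 1),
        ((n - I).choose (J - I + k) : ℝ) * ((I).choose k : ℝ) ≤ (n.choose (n - J) : ℝ) := by
      have hnat : ∑ k ∈ Finset.range (min I (n - J) + 1),
          (n - I).choose (J - I + k) * (I).choose k ≤ n.choose (n - J) := by
        have hre : ∀ k ∈ Finset.range (min I (n - J) + 1),
            (n - I).choose (J - I + k) * (I).choose k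
              = (n - I).choose ((n - J) - k) * (I).choose k := by
          intro k hk
          simp only [Finset.mem_range] at hk
          have hkm : k ≤ n - J := by omega
          have h1 : J - I + k ≤ n - I := by omega
          have h2 : (n - I) - (J - I + k) = (n - J) - k := by omega
          rw [← Nat.choose_symm h1, h2]
        rw [Finset.sum_congr rfl hre]
        calc ∑ k ∈ Finset.range (min I (n - J) + 1),
              (n - I).choose ((n - J) - k) * (I).choose k
            ≤ ∑ k ∈ Finset.range ((n - J) + 1),
              (n - I).choose ((n - J) - k) * (I).choose k := by
              apply Finset.sum_le_sum_of_subset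
              apply Finset.range_subset_range.mpr; omega
          _ = ((n - I) + I).choose (n - J) := vand_aux _ _ _
          _ = n.choose (n - J) := by congr 1; omega
      calc ∑ k ∈ Finset.range (min I (n - J) + 1),
          ((n - I).choose (J - I + k) : ℝ) * ((I).choose k : ℝ)
          = ((∑ k ∈ Finset.range (min I (n - J) + 1),
              (n - I).choose (J - I + k) * (I).choose k : ℕ) : ℝ) := by push_cast; ring
        _ ≤ _ := by exact_mod_cast hnat
    calc (∑ k ∈ Finset.range (min I (n - J) + 1),
          ((n - I).choose (J - I + k) : ℝ) * ((I).choose k : ℝ)) * (R ^ (J - I) * (1 - R) ^ E)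
        ≤ (n.choose (n - J) : ℝ) * (R ^ (J - I) * (1 - R) ^ E) := by
          apply mul_le_mul_of_nonneg_right stepB
          positivity
      _ = _ := by ring
  · -- Part 2
    intro c
    set δ : ℝ := (1 - ε₁) / 2 with hδdef
    have hδ : 0 < δ := by simp only [hδdef]; linarith
    have l2 : (0:ℝ) < Real.log 2 := Real.log_pos (by norm_num)
    set C0 : ℝ := 4 / (δ * Real.log 2) + 2 / ε₂ + 2 / (1 - ε₁) + 2 with hC0def
    have hp1 : (0:ℝ) < 4 / (δ * Real.log 2) := by positivity
    have hp2 : (0:ℝ) < 2 / ε₂ := by positivity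
    have hp3 : (0:ℝ) < 2 / (1 - ε₁) := div_pos (by norm_num) (by linarith)
    have ev1 : ∀ᶠ n : ℕ in atTop, C0 ≤ Real.log n :=
      (Real.tendsto_log_atTop.comp tendsto_natCast_atTop_atTop).eventually_ge_atTop C0
    have hlog : (fun n : ℕ => Real.log n) =o[atTop] (fun n : ℕ => (n : ℝ)) :=
      Real.isLittleO_log_id_atTop.comp_tendsto tendsto_natCast_atTop_atTop
    have hε : (0:ℝ) < δ * Real.log 2 / (4 * (|c| + 1)) := by positivity
    have evc : ∀ᶠ n : ℕ in atTop,
        ‖Real.log n‖ ≤ δ * Real.log 2 / (4 * (|c| + 1)) * ‖(n : ℝ)‖ :=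
      hlog.bound hε
    filter_upwards [hil, hjl, ev1, evc, eventually_ge_atTop 2] with n hi h_j hL hcn hn2
    obtain ⟨hi2, hi1⟩ := hi
    set I := i n
    set J := j n
    set R := r n
    set L := Real.log n with hLdef
    have hIJ : I ≤ J := hij n
    have hJn : J ≤ n := hjn n
    have hR0 : (0:ℝ) ≤ R := hr0 n
    have hR2 : R ≤ 1/2 := hr12 n
    have hnR : (2:ℝ) ≤ (n:ℝ) := by exact_mod_cast hn2
    have hn0 : (0:ℝ) < (n:ℝ) := by linarith
    have hL1 : (1:ℝ) ≤ L := by simp only [hC0def] at hL; linarith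
    have hL0 : (0:ℝ) < L := by linarith
    have hL2 : 4 / (δ * Real.log 2) ≤ L ^ 2 := by
      have hLsq : L ≤ L ^ 2 := by nlinarith [hL1, hL0]
      simp only [hC0def] at hL; linarith
    have hL3 : (2:ℝ) / ε₂ ≤ L ^ 3 ∧ (2:ℝ) / (1 - ε₁) ≤ L ^ 3 := by
      have h1 : L ≤ L ^ 3 := by nlinarith [hL1, hL0]
      simp only [hC0def] at hL
      constructor <;> linarith
    have hmJ : ((n - J : ℕ) : ℝ) = (n:ℝ) - J := by push_cast [Nat.cast_sub hJn]; ring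
    have hbJ : ((J - I : ℕ) : ℝ) = (J:ℝ) - I := by push_cast [Nat.cast_sub hIJ]; ring
    have hnj : (n:ℝ) - (J:ℝ) ≤ (n:ℝ) / L ^ 3 := by linarith
    -- j - i ≥ δ n
    have hδL : 1 ≤ δ * L ^ 3 := by
      have h2 : δ * (2 / (1 - ε₁)) ≤ δ * L ^ 3 := mul_le_mul_of_nonneg_left hL3.2 hδ.le
      have h3 : δ * (2 / (1 - ε₁)) = 1 := by
        rw [hδdef]; field_simp
        exact div_self (ne_of_gt (by linarith : (0:ℝ) < 1 - ε₁))
      linarith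
    have hd1 : (n:ℝ) / L ^ 3 ≤ δ * n := by
      rw [div_le_iff₀ (pow_pos hL0 3)]
      calc (n:ℝ) = (n:ℝ) * 1 := (mul_one _).symm
        _ ≤ (n:ℝ) * (δ * L ^ 3) := mul_le_mul_of_nonneg_left hδL hn0.le
        _ = δ * ↑n * L ^ 3 := by ring
    have hJI : δ * n ≤ (J:ℝ) - I := by
      have he : ε₁ * n = (n:ℝ) - 2 * δ * n := by rw [hδdef]; ring
      linarith
    -- exponent nonneg
    have hE0 : (0:ℝ) ≤ (n:ℝ) - ((J:ℝ) - I) - 2 * n / L ^ 3 := by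
      have h2ε : (2:ℝ) ≤ ε₂ * L ^ 3 := by
        have h2 : ε₂ * (2 / ε₂) ≤ ε₂ * L ^ 3 := mul_le_mul_of_nonneg_left hL3.1 hε2.le
        have h3 : ε₂ * (2 / ε₂) = 2 := by field_simp
        linarith
      have h2L : 2 * (n:ℝ) / L ^ 3 ≤ ε₂ * n := by
        rw [div_le_iff₀ (pow_pos hL0 3)]
        calc 2 * (n:ℝ) = (n:ℝ) * 2 := by ring
          _ ≤ (n:ℝ) * (ε₂ * L ^ 3) := mul_le_mul_of_nonneg_left h2ε hn0.le
          _ = ε₂ * ↑n * L ^ 3 := by ring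
      linarith
    -- bound pieces
    have h1 : (n.choose (n - J) : ℝ) ≤ (n:ℝ) ^ (n - J) := by
      exact_mod_cast Nat.cast_le.mpr (Nat.choose_le_pow n (n - J))
    have h2 : R ^ (J - I) ≤ ((2:ℝ)⁻¹) ^ (J - I) :=
      pow_le_pow_left₀ hR0 (by linarith) _
    have h3 : ((1:ℝ) - R) ^ ((n:ℝ) - ((J:ℝ) - I) - 2 * n / L ^ 3) ≤ 1 :=
      Real.rpow_le_one (by linarith) (by linarith) hE0
    have hprod : (n.choose (n - J) : ℝ) * R ^ (J - I) *
        ((1:ℝ) - R) ^ ((n:ℝ) - ((J:ℝ) - I) - 2 * n / L ^ 3)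
        ≤ (n:ℝ) ^ (n - J) * ((2:ℝ)⁻¹) ^ (J - I) := by
      calc (n.choose (n - J) : ℝ) * R ^ (J - I) *
          ((1:ℝ) - R) ^ ((n:ℝ) - ((J:ℝ) - I) - 2 * n / L ^ 3)
          ≤ (n:ℝ) ^ (n - J) * ((2:ℝ)⁻¹) ^ (J - I) * 1 := by
            have hh0 : (0:ℝ) ≤ ((1:ℝ) - R) ^ ((n:ℝ) - ((J:ℝ) - I) - 2 * n / L ^ 3) :=
              Real.rpow_nonneg (by linarith) _
            have := mul_le_mul (mul_le_mul h1 h2 (by positivity) (by positivity)) h3 hh0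
              (by positivity)
            exact this
        _ = _ := by ring
    refine lt_of_le_of_lt hprod ?_
    -- now strict inequality via exp
    have e1 : (n:ℝ) ^ (n - J) = Real.exp (L * ((n - J : ℕ) : ℝ)) := by
      rw [← Real.rpow_natCast, Real.rpow_def_of_pos hn0]
    have e2 : ((2:ℝ)⁻¹) ^ (J - I) = Real.exp (-(Real.log 2) * ((J - I : ℕ) : ℝ)) := by
      rw [← Real.rpow_natCast, Real.rpow_def_of_pos (by norm_num : (0:ℝ) < 2⁻¹),
        Real.log_inv]
    have e3 : (n:ℝ) ^ (-c) = Real.exp (L * (-c)) := Real.rpow_def_of_pos hn0 _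
    rw [e1, e2, e3, ← Real.exp_add, Real.exp_lt_exp]
    rw [hmJ, hbJ]
    -- key: L * (n - J) - log 2 * (J - I) < -c * L
    have k1 : L * ((n:ℝ) - J) ≤ δ * Real.log 2 / 4 * n := by
      have s1 : L * ((n:ℝ) - J) ≤ (n:ℝ) / L ^ 2 := by
        have : L * ((n:ℝ) - J) ≤ L * ((n:ℝ) / L ^ 3) := by
          apply mul_le_mul_of_nonneg_left hnj (le_of_lt hL0)
        have heq : L * ((n:ℝ) / L ^ 3) = (n:ℝ) / L ^ 2 := by
          field_simp
        linarith [heq ▸ this]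
      have s2 : (n:ℝ) / L ^ 2 ≤ δ * Real.log 2 / 4 * n := by
        rw [div_le_iff₀ (pow_pos hL0 2)]
        rw [div_le_iff₀ (mul_pos hδ l2)] at hL2
        calc (n:ℝ) = (n:ℝ) * 4 / 4 := by ring
          _ ≤ (n:ℝ) * (L ^ 2 * (δ * Real.log 2)) / 4 := by
              apply div_le_div_of_nonneg_right ?_ (by norm_num)
              exact mul_le_mul_of_nonneg_left hL2 hn0.le
          _ = δ * Real.log 2 / 4 * ↑n * L ^ 2 := by ring
      linarith
    have k2 : c * L ≤ δ * Real.log 2 / 4 * n := by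
      rw [Real.norm_eq_abs, Real.norm_eq_abs, abs_of_nonneg (by linarith : (0:ℝ) ≤ L),
        abs_of_nonneg (le_of_lt hn0)] at hcn
      have : c * L ≤ |c| * L := by
        apply mul_le_mul_of_nonneg_right (le_abs_self c) (le_of_lt hL0)
      have h4 : |c| * L ≤ |c| * (δ * Real.log 2 / (4 * (|c| + 1)) * n) :=
        mul_le_mul_of_nonneg_left hcn (abs_nonneg c)
      have h5 : |c| * (δ * Real.log 2 / (4 * (|c| + 1)) * n)
          ≤ δ * Real.log 2 / 4 * n := by
        have he : |c| * (δ * Real.log 2 / (4 * (|c| + 1)) * (n:ℝ))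
            = δ * Real.log 2 * (n:ℝ) * (|c| / (4 * (|c| + 1))) := by ring
        have h6 : |c| / (4 * (|c| + 1)) ≤ 1 / 4 := by
          rw [div_le_div_iff₀ (by positivity) (by norm_num)]
          nlinarith [abs_nonneg c]
        have h7 : δ * Real.log 2 * (n:ℝ) * (|c| / (4 * (|c| + 1)))
            ≤ δ * Real.log 2 * (n:ℝ) * (1 / 4) :=
          mul_le_mul_of_nonneg_left h6 (mul_nonneg (mul_nonneg hδ.le l2.le) hn0.le)
        have h8 : δ * Real.log 2 * (n:ℝ) * (1 / 4) = δ * Real.log 2 / 4 * n := by ring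
        linarith
      linarith
    have k3 : δ * Real.log 2 * n ≤ Real.log 2 * ((J:ℝ) - I) := by
      have := mul_le_mul_of_nonneg_left hJI l2.le
      linarith [this]
    nlinarith [mul_pos (mul_pos hδ l2) hn0]
end
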